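/- Fix D ≥ 0 and ε, δ ∈ [0,1), and assume G^δ_{D,ε}(X) < +∞. Then G^δ_{D,ε}(X) − 1 < R̃(D, ε, δ) ≤ ⌊G^δ_{D,ε}(X) + (2 log₂ e) / 2^{G^δ_{D,ε}(X)}⌋. -/

import Mathlib

open scoped ENNReal
open MeasureTheory

noncomputable section

/-- The smooth max entropy `H^δ(P)` (base 2) of a probability distribution `P`
on a finite alphabet `𝒴`: the least `log₂ |𝒲|` over subsets `𝒲 ⊆ 𝒴` of
probability at least `1 - δ`. -/
def smoothMaxEnt {𝒴 : Type} [Fintype 𝒴] (P : 𝒴 → ℝ≥0∞) (δ : ℝ) : ℝ :=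
  sInf {r : ℝ | ∃ W : Finset 𝒴,
    ENNReal.ofReal (1 - δ) ≤ ∑ y ∈ W, P y ∧ r = Real.logb 2 (W.card)}

/-- A channel (conditional probability distribution) from `𝒳` to `𝒴`. -/
def IsChannel {𝒳 𝒴 : Type} [Fintype 𝒴] (W : 𝒳 → 𝒴 → ℝ≥0∞) : Prop :=
  ∀ x, ∑ y, W x y = 1

/-- The output marginal distribution of the channel `W` with input distribution `pX`. -/
def marginal {𝒳 𝒴 : Type} [Fintype 𝒳] (pX : 𝒳 → ℝ≥0∞) (W : 𝒳 → 𝒴 → ℝ≥0∞) : 𝒴 → ℝ≥0∞ :=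
  fun y => ∑ x, pX x * W x y

/-- `Pr{d(X,Y) > D}` for the joint law `pX · W`. -/
def chExcess {𝒳 𝒴 : Type} [Fintype 𝒳] [Fintype 𝒴] (pX : 𝒳 → ℝ≥0∞) (W : 𝒳 → 𝒴 → ℝ≥0∞)
    (d : 𝒳 → 𝒴 → ℝ) (D : ℝ) : ℝ≥0∞ :=
  ∑ x, ∑ y, if D < d x y then pX x * W x y else 0

/-- The quantity `G^δ_{D,ε}(X)` as a value in `[0,∞]`: the infimum of the smooth max
entropy of the output marginal, over channels whose excess-distortion probability is
at most `ε`; it equals `+∞` if no such channel exists. -/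
def Gq {𝒳 𝒴 : Type} [Fintype 𝒳] [Fintype 𝒴] (pX : 𝒳 → ℝ≥0∞) (d : 𝒳 → 𝒴 → ℝ)
    (D ε δ : ℝ) : ℝ≥0∞ :=
  ⨅ (W : 𝒳 → 𝒴 → ℝ≥0∞) (_ : IsChannel W) (_ : chExcess pX W d D ≤ ENNReal.ofReal ε),
    ENNReal.ofReal (smoothMaxEnt (marginal pX W) δ)

/-- `(f, g)` is a `(D, R, ε, δ)` code: `f` is a (possibly stochastic) encoder assigning
to each source symbol a probability distribution on binary strings (`List Bool`),
`g` is a decoder, the excess distortion probability is at most `ε`, and the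
overflow probability is at most `δ`. -/
def IsCode {𝒳 𝒴 : Type} [Fintype 𝒳] (pX : 𝒳 → ℝ≥0∞) (d : 𝒳 → 𝒴 → ℝ)
    (D R ε δ : ℝ) (f : 𝒳 → List Bool → ℝ≥0∞) (g : List Bool → 𝒴) : Prop :=
  (∀ x, ∑' w : List Bool, f x w = 1) ∧
  (∑ x, ∑' w : List Bool, (if D < d x (g w) then pX x * f x w else 0))
      ≤ ENNReal.ofReal ε ∧
  (∑ x, ∑' w : List Bool, (if R < (w.length : ℝ) then pX x * f x w else 0))
      ≤ ENNReal.ofReal δ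

/-- The deterministic encoder `f : 𝒳 → {0,1}*` viewed as a stochastic encoder. -/
def detEnc {𝒳 : Type} (f : 𝒳 → List Bool) : 𝒳 → List Bool → ℝ≥0∞ :=
  fun x w => if w = f x then 1 else 0

/-- The sum of the `j` largest values of `P`. -/
def topSum {𝒴 : Type} [Fintype 𝒴] (P : 𝒴 → ℝ≥0∞) (j : ℕ) : ℝ≥0∞ :=
  ⨆ (W : Finset 𝒴) (_ : W.card ≤ j), ∑ y ∈ W, P y

/-!
The infimum defining `G` is attained by a channel `V` together with a set `W` of `K` output
symbols of mass at least `1 - δ`, so that `G = log₂ K`.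

Converse: a deterministic code of rate `R` gives the deterministic channel `x ↦ g (f x)`. With
probability at least `1 - δ` its output lies in the image under `g` of the fewer than
`2 ^ (⌊R⌋₊ + 1)` strings of length at most `⌊R⌋₊`, hence `G < ⌊R⌋₊ + 1`.

Achievability: the source symbols that no element of `W` reproduces within distortion `D` have
total mass at most `ε + δ` (excess distortion plus `Pr{Y ∉ W}`). Split them greedily into a part
of mass at most `ε`, which is reproduced badly, a part of mass at most `δ`, which gets long
descriptions of good reproductions, and at most one straddling symbol, which gets one extra
short codeword. So `K + 1` strings of length at most `N` suffice, i.e. `K + 2 ≤ 2 ^ (N + 1)`,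
and this holds for `N = ⌊G + 2 log₂ e / 2 ^ G⌋` because `K + 2 ≤ K e ^ (2 / K)`.
-/

open Finset

def shortStrings (n : ℕ) : Finset (List Bool) :=
  (range (n + 1)).biUnion fun k => univ.image (List.ofFn : (Fin k → Bool) → List Bool)

lemma mem_shortStrings {n : ℕ} {w : List Bool} : w ∈ shortStrings n ↔ w.length ≤ n := by
  simp only [shortStrings, mem_biUnion, mem_range, mem_image, mem_univ, true_and]
  constructor
  · rintro ⟨k, hk, v, rfl⟩
    rw [List.length_ofFn]
    omega
  · exact fun hw => ⟨w.length, by omega, w.get, List.ofFn_get w⟩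

lemma card_shortStrings_add_one (n : ℕ) : #(shortStrings n) + 1 = 2 ^ (n + 1) := by
  rw [shortStrings, card_biUnion]
  · simp only [card_image_of_injective _ List.ofFn_injective, card_univ, Fintype.card_fun,
      Fintype.card_bool, Fintype.card_fin]
    induction n with
    | zero => simp
    | succ n ih => rw [sum_range_succ, add_right_comm, ih]; ring
  · intro k _ l _ hkl
    simp only [Function.onFun, disjoint_left, mem_image]
    rintro _ ⟨u, -, rfl⟩ ⟨v, -, huv⟩
    exact hkl (by simpa using congrArg List.length huv.symm)

lemma exists_injective_length_le_of_card_lt {𝒴 : Type} [Fintype 𝒴] (S : Finset 𝒴) {n : ℕ}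
    (hS : #S < 2 ^ (n + 1)) :
    ∃ e : 𝒴 → List Bool, Function.Injective e ∧ ∀ y ∈ S, (e y).length ≤ n := by
  classical
  obtain ⟨short⟩ : Nonempty (S ↪ shortStrings n) :=
    Function.Embedding.nonempty_of_card_le <| by
      rw [Fintype.card_coe, Fintype.card_coe]
      have := card_shortStrings_add_one n
      omega
  let long : 𝒴 → List Bool := fun y => List.replicate (n + 1 + Fintype.equivFin 𝒴 y) true
  refine ⟨fun y => if h : y ∈ S then short ⟨y, h⟩ else long y, ?_, fun y hy => ?_⟩
  · refine Function.Injective.dite (· ∈ S) (f' := fun y => long y.1)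
      (Subtype.val_injective.comp short.injective) ?_ ?_
    · intro y y' h
      have := congrArg List.length h
      simp only [long, List.length_replicate] at this
      exact Subtype.ext ((Fintype.equivFin 𝒴).injective (Fin.ext (by omega)))
    · intro y y' hy hy' h
      have h1 := mem_shortStrings.mp (short ⟨y, hy⟩).2
      have h2 := congrArg List.length h
      simp only [Function.comp_apply, long, List.length_replicate] at h1 h2
      omega
  · simp only [dif_pos hy]
    exact mem_shortStrings.mp (short ⟨y, hy⟩).2

lemma logb_two_natCast_nonneg (n : ℕ) : 0 ≤ Real.logb 2 n :=
  div_nonneg (Real.log_natCast_nonneg n) (Real.log_nonneg one_le_two)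

lemma logb_two_natCast_lt_add_one {k n : ℕ} (h : k < 2 ^ (n + 1)) :
    Real.logb 2 k < n + 1 := by
  rcases k.eq_zero_or_pos with rfl | hk
  · simp only [CharP.cast_eq_zero, Real.logb_zero]
    positivity
  rw [Real.logb_lt_iff_lt_rpow one_lt_two (by exact_mod_cast hk)]
  exact_mod_cast h

lemma add_two_le_two_rpow {k : ℝ} (hk : 0 < k) :
    k + 2 ≤ 2 ^ (Real.logb 2 k + 2 * Real.logb 2 (Real.exp 1) / 2 ^ Real.logb 2 k) := by
  have hexp : (2 : ℝ) ^ (2 * Real.logb 2 (Real.exp 1) / k) = Real.exp (2 / k) := by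
    rw [mul_comm, mul_div_assoc, Real.rpow_mul zero_le_two,
      Real.rpow_logb two_pos (by norm_num) (Real.exp_pos 1), Real.exp_one_rpow]
  rw [Real.rpow_logb two_pos (by norm_num) hk, Real.rpow_add two_pos,
    Real.rpow_logb two_pos (by norm_num) hk, hexp]
  calc k + 2 = k * (2 / k + 1) := by field_simp; ring
    _ ≤ k * Real.exp (2 / k) := by gcongr; exact Real.add_one_le_exp _

lemma add_two_le_two_pow_floor_add_one {K : ℕ} (hK : 0 < K) {G : ℝ} (hG : G = Real.logb 2 K) :
    K + 2 ≤ 2 ^ (⌊G + 2 * Real.logb 2 (Real.exp 1) / 2 ^ G⌋₊ + 1) := by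
  subst hG
  have h := (add_two_le_two_rpow (k := K) (by exact_mod_cast hK)).trans_lt
    (Real.rpow_lt_rpow_of_exponent_lt one_lt_two (Nat.lt_floor_add_one _))
  exact_mod_cast h.le

lemma ENNReal.exists_split_sum_le {ι : Type*} [DecidableEq ι] (w : ι → ℝ≥0∞) (B : Finset ι)
    {a b c : ℝ≥0∞} (h : c + ∑ x ∈ B, w x ≤ a + b) (hc : c ≤ a) :
    ∃ T R, T ⊆ B ∧ R ⊆ B ∧ #(B \ (T ∪ R)) ≤ 1 ∧ c + ∑ x ∈ T, w x ≤ a ∧ ∑ x ∈ R, w x ≤ b := by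
  induction B using Finset.induction generalizing c with
  | empty => exact ⟨∅, ∅, by simp, by simp, by simp, by simpa using hc, by simp⟩
  | insert x B hx ih =>
    rw [sum_insert hx, ← add_assoc] at h
    by_cases hxa : c + w x ≤ a
    · obtain ⟨T, R, hT, hR, hcard, hTa, hRb⟩ := ih h hxa
      refine ⟨insert x T, R, insert_subset_insert x hT, hR.trans (subset_insert x B),
        (card_le_card ?_).trans hcard, ?_, hRb⟩
      · intro y
        simp only [mem_sdiff, mem_insert, mem_union]
        tauto
      · rwa [sum_insert (fun h => hx (hT h)), ← add_assoc]
    · refine ⟨∅, B, empty_subset _, subset_insert x B, ?_, by simpa using hc, ?_⟩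
      · simp [insert_sdiff_of_notMem _ hx]
      · by_contra hb
        exact absurd h (not_le.mpr (ENNReal.add_lt_add (not_le.mp hxa) (not_le.mp hb)))

lemma ENNReal.sum_compl_le_ofReal_iff {α : Type*} [Fintype α] [DecidableEq α] {q : α → ℝ≥0∞}
    (hq : ∑ a, q a = 1) (s : Finset α) {δ : ℝ} (hδ : 0 ≤ δ) :
    ∑ a ∈ sᶜ, q a ≤ ENNReal.ofReal δ ↔ ENNReal.ofReal (1 - δ) ≤ ∑ a ∈ s, q a := by
  have htotal := sum_add_sum_compl s q
  rw [hq] at htotal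
  have hs : ∑ a ∈ s, q a ≠ ⊤ := ne_top_of_le_ne_top ENNReal.one_ne_top (htotal ▸ le_self_add)
  have hsc : ∑ a ∈ sᶜ, q a ≠ ⊤ := ne_top_of_le_ne_top ENNReal.one_ne_top (htotal ▸ le_add_self)
  have hreal := congrArg ENNReal.toReal htotal
  rw [ENNReal.toReal_add hs hsc, ENNReal.toReal_one] at hreal
  rw [ENNReal.le_ofReal_iff_toReal_le hsc hδ, ENNReal.ofReal_le_iff_le_toReal hs]
  constructor <;> intro h <;> linarith

section Channels

variable {𝒳 𝒴 : Type} [Fintype 𝒳] [Fintype 𝒴] {pX : 𝒳 → ℝ≥0∞} {V : 𝒳 → 𝒴 → ℝ≥0∞}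

lemma sum_marginal (hV : IsChannel V) : ∑ y, marginal pX V y = ∑ x, pX x := by
  unfold marginal
  rw [sum_comm]
  simp_rw [← mul_sum, hV _, mul_one]

lemma ofReal_one_sub_le_sum_marginal (hpX : ∑ x, pX x = 1) (hV : IsChannel V) {δ : ℝ}
    (hδ : 0 ≤ δ) : ENNReal.ofReal (1 - δ) ≤ ∑ y, marginal pX V y := by
  rw [sum_marginal hV, hpX]
  exact ENNReal.ofReal_le_one.mpr (by linarith)

lemma sum_le_chExcess_add_sum_compl [DecidableEq 𝒴] (hV : IsChannel V) {d : 𝒳 → 𝒴 → ℝ}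
    {D : ℝ} {A : Finset 𝒳} {W : Finset 𝒴} (hA : ∀ x ∈ A, ∀ y ∈ W, D < d x y) :
    ∑ x ∈ A, pX x ≤ chExcess pX V d D + ∑ y ∈ Wᶜ, marginal pX V y := by
  calc ∑ x ∈ A, pX x = ∑ x ∈ A, ∑ y, pX x * V x y := by simp_rw [← mul_sum, hV _, mul_one]
    _ ≤ ∑ x ∈ A, ∑ y, ((if D < d x y then pX x * V x y else 0) +
          if y ∈ Wᶜ then pX x * V x y else 0) := by
        refine sum_le_sum fun x hx => sum_le_sum fun y _ => ?_
        by_cases hy : y ∈ W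
        · simp [hA x hx y hy]
        · simp [hy]
    _ ≤ ∑ x, ∑ y, ((if D < d x y then pX x * V x y else 0) +
          if y ∈ Wᶜ then pX x * V x y else 0) := sum_le_sum_of_subset (subset_univ A)
    _ = chExcess pX V d D + ∑ y ∈ Wᶜ, marginal pX V y := by
        simp_rw [sum_add_distrib]
        congr 1
        rw [sum_comm, ← univ_inter Wᶜ, ← sum_ite_mem]
        simp only [marginal, sum_ite_irrel, sum_const_zero, univ_inter]

lemma smoothMaxEnt_le {P : 𝒴 → ℝ≥0∞} {δ : ℝ} {S : Finset 𝒴}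
    (hS : ENNReal.ofReal (1 - δ) ≤ ∑ y ∈ S, P y) : smoothMaxEnt P δ ≤ Real.logb 2 #S :=
  csInf_le ⟨0, by rintro _ ⟨W, -, rfl⟩; exact logb_two_natCast_nonneg _⟩ ⟨S, hS, rfl⟩

lemma exists_smoothMaxEnt_eq {P : 𝒴 → ℝ≥0∞} {δ : ℝ}
    (hP : ENNReal.ofReal (1 - δ) ≤ ∑ y, P y) :
    ∃ S : Finset 𝒴, ENNReal.ofReal (1 - δ) ≤ ∑ y ∈ S, P y ∧
      smoothMaxEnt P δ = Real.logb 2 #S := by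
  obtain ⟨S, hS, hmin⟩ : smoothMaxEnt P δ ∈ {r : ℝ | ∃ S : Finset 𝒴,
      ENNReal.ofReal (1 - δ) ≤ ∑ y ∈ S, P y ∧ r = Real.logb 2 #S} :=
    Set.Nonempty.csInf_mem ⟨_, univ, hP, rfl⟩ <|
      (Set.finite_range fun S : Finset 𝒴 => Real.logb 2 #S).subset
        (by rintro _ ⟨S, -, rfl⟩; exact ⟨S, rfl⟩)
  exact ⟨S, hS, hmin⟩

variable {d : 𝒳 → 𝒴 → ℝ} {D ε δ : ℝ}

lemma Gq_le (hV : IsChannel V) (hexc : chExcess pX V d D ≤ ENNReal.ofReal ε) :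
    Gq pX d D ε δ ≤ ENNReal.ofReal (smoothMaxEnt (marginal pX V) δ) :=
  iInf_le_of_le V (iInf_le_of_le hV (iInf_le _ hexc))

lemma exists_Gq_eq (hpX : ∑ x, pX x = 1) (hδ : 0 ≤ δ) (hG : Gq pX d D ε δ ≠ ⊤) :
    ∃ V : 𝒳 → 𝒴 → ℝ≥0∞, IsChannel V ∧ chExcess pX V d D ≤ ENNReal.ofReal ε ∧
      Gq pX d D ε δ = ENNReal.ofReal (smoothMaxEnt (marginal pX V) δ) := by
  let F : {V : 𝒳 → 𝒴 → ℝ≥0∞ // IsChannel V ∧ chExcess pX V d D ≤ ENNReal.ofReal ε} → ℝ≥0∞ :=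
    fun V => ENNReal.ofReal (smoothMaxEnt (marginal pX V.1) δ)
  have hGF : Gq pX d D ε δ = ⨅ V, F V := by simp only [Gq, iInf_and', iInf_subtype', F]
  have : Nonempty {V : 𝒳 → 𝒴 → ℝ≥0∞ // IsChannel V ∧ chExcess pX V d D ≤ ENNReal.ofReal ε} := by
    by_contra h
    rw [not_nonempty_iff] at h
    exact hG (by rw [hGF, iInf_of_empty])
  have hfin : (Set.range F).Finite := by
    refine (Set.finite_range fun S : Finset 𝒴 => ENNReal.ofReal (Real.logb 2 #S)).subset ?_
    rintro _ ⟨⟨V, hV, -⟩, rfl⟩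
    obtain ⟨S, -, hS⟩ := exists_smoothMaxEnt_eq (ofReal_one_sub_le_sum_marginal hpX hV hδ)
    exact ⟨S, by simp only [F, hS]⟩
  obtain ⟨⟨V, hV, hexc⟩, hVF⟩ := (Set.range_nonempty F).csInf_mem hfin
  exact ⟨V, hV, hexc, hGF.trans hVF.symm⟩

lemma exists_optimal_channel (hpX : ∑ x, pX x = 1) (hδ : 0 ≤ δ ∧ δ < 1)
    (hG : Gq pX d D ε δ ≠ ⊤) :
    ∃ (V : 𝒳 → 𝒴 → ℝ≥0∞) (W : Finset 𝒴), IsChannel V ∧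
      chExcess pX V d D ≤ ENNReal.ofReal ε ∧ W.Nonempty ∧
      ENNReal.ofReal (1 - δ) ≤ ∑ y ∈ W, marginal pX V y ∧
      (Gq pX d D ε δ).toReal = Real.logb 2 #W := by
  obtain ⟨V, hV, hexc, hGV⟩ := exists_Gq_eq hpX hδ.1 hG
  obtain ⟨W, hW, hWG⟩ := exists_smoothMaxEnt_eq (ofReal_one_sub_le_sum_marginal hpX hV hδ.1)
  have hWne : W.Nonempty := nonempty_of_sum_ne_zero
    ((ENNReal.ofReal_pos.mpr (by linarith)).trans_le hW).ne'
  refine ⟨V, W, hV, hexc, hWne, hW, ?_⟩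
  rw [hGV, hWG, ENNReal.toReal_ofReal (logb_two_natCast_nonneg _)]

lemma Gq_le_logb_card [DecidableEq 𝒴] (φ : 𝒳 → 𝒴)
    (hφ : ∑ x with D < d x (φ x), pX x ≤ ENNReal.ofReal ε)
    {S : Finset 𝒴} (hS : ENNReal.ofReal (1 - δ) ≤ ∑ x with φ x ∈ S, pX x) :
    Gq pX d D ε δ ≤ ENNReal.ofReal (Real.logb 2 #S) := by
  let V : 𝒳 → 𝒴 → ℝ≥0∞ := fun x y => if y = φ x then 1 else 0
  have hV : IsChannel V := fun x => by simp [V]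
  have hexc : chExcess pX V d D = ∑ x with D < d x (φ x), pX x := by
    simp only [chExcess, V, sum_filter]
    refine sum_congr rfl fun x _ => ?_
    rw [Fintype.sum_eq_single (φ x) fun y hy => by simp [hy]]
    simp
  have hmarg : ∑ y ∈ S, marginal pX V y = ∑ x with φ x ∈ S, pX x := by
    simp only [marginal, V, sum_filter, mul_ite, mul_one, mul_zero]
    rw [sum_comm]
    simp
  exact (Gq_le hV (hexc ▸ hφ)).trans (ENNReal.ofReal_le_ofReal (smoothMaxEnt_le (hmarg ▸ hS)))

end Channels

lemma isCode_detEnc_iff {𝒳 𝒴 : Type} [Fintype 𝒳] {pX : 𝒳 → ℝ≥0∞} {d : 𝒳 → 𝒴 → ℝ}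
    {D R ε δ : ℝ} {f : 𝒳 → List Bool} {g : List Bool → 𝒴} :
    IsCode pX d D R ε δ (detEnc f) g ↔
      ∑ x with D < d x (g (f x)), pX x ≤ ENNReal.ofReal ε ∧
        ∑ x with R < (f x).length, pX x ≤ ENNReal.ofReal δ := by
  have hcollapse (P : List Bool → Prop) [DecidablePred P] (x : 𝒳) :
      ∑' w, (if P w then pX x * detEnc f x w else 0) = if P (f x) then pX x else 0 := by
    rw [tsum_eq_single (f x) fun w hw => by simp [detEnc, hw]]
    simp [detEnc]
  have hone (x : 𝒳) : ∑' w, detEnc f x w = 1 := tsum_ite_eq (f x) 1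
  simp only [IsCode, hcollapse, hone, sum_filter, implies_true, true_and]

lemma toReal_Gq_lt_floor_add_one {𝒳 𝒴 : Type} [Fintype 𝒳] [Fintype 𝒴] {pX : 𝒳 → ℝ≥0∞}
    (hpX : ∑ x, pX x = 1) {d : 𝒳 → 𝒴 → ℝ} {D R ε δ : ℝ} (hδ : 0 ≤ δ)
    {f : 𝒳 → List Bool} {g : List Bool → 𝒴} (hcode : IsCode pX d D R ε δ (detEnc f) g) :
    (Gq pX d D ε δ).toReal < ⌊R⌋₊ + 1 := by
  classical
  obtain ⟨hdist, hlong⟩ := isCode_detEnc_iff.mp hcode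
  set S := (shortStrings ⌊R⌋₊).image g
  have hshort : ENNReal.ofReal (1 - δ) ≤ ∑ x with ¬ R < (f x).length, pX x := by
    rwa [← ENNReal.sum_compl_le_ofReal_iff hpX _ hδ, compl_filter, filter_congr fun _ _ => not_not]
  have hS : ENNReal.ofReal (1 - δ) ≤ ∑ x with g (f x) ∈ S, pX x := by
    refine hshort.trans (sum_le_sum_of_subset fun x hx => ?_)
    simp only [mem_filter, mem_univ, true_and, not_lt] at hx ⊢
    exact mem_image_of_mem g (mem_shortStrings.mpr (Nat.le_floor hx))
  have hcard : #S < 2 ^ (⌊R⌋₊ + 1) :=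
    card_image_le.trans_lt (by have := card_shortStrings_add_one ⌊R⌋₊; omega)
  calc (Gq pX d D ε δ).toReal ≤ Real.logb 2 #S :=
        ENNReal.toReal_le_of_le_ofReal (logb_two_natCast_nonneg _) (Gq_le_logb_card _ hdist hS)
    _ < ⌊R⌋₊ + 1 := logb_two_natCast_lt_add_one hcard

section Achievability

variable {𝒳 𝒴 : Type} [Fintype 𝒳] [Fintype 𝒴] [DecidableEq 𝒴] {pX : 𝒳 → ℝ≥0∞}
  {V : 𝒳 → 𝒴 → ℝ≥0∞} {d : 𝒳 → 𝒴 → ℝ} {D ε δ : ℝ}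

lemma sum_uncoverable_le (hV : IsChannel V) (hexc : chExcess pX V d D ≤ ENNReal.ofReal ε) :
    ∑ x with ∀ y, D < d x y, pX x ≤ ENNReal.ofReal ε := by
  have := sum_le_chExcess_add_sum_compl (pX := pX) hV (A := {x | ∀ y, D < d x y}) (W := univ)
    fun x hx y _ => (mem_filter.mp hx).2 y
  simpa using this.trans (add_le_add_left hexc _)

lemma sum_uncoverable_add_sum_uncovered_le (hV : IsChannel V)
    (hexc : chExcess pX V d D ≤ ENNReal.ofReal ε) {W : Finset 𝒴}
    (hW : ∑ y ∈ Wᶜ, marginal pX V y ≤ ENNReal.ofReal δ) :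
    ∑ x with ∀ y, D < d x y, pX x + ∑ x with (∀ y ∈ W, D < d x y) ∧ ∃ y, d x y ≤ D, pX x ≤
      ENNReal.ofReal ε + ENNReal.ofReal δ := by
  classical
  rw [← sum_union (disjoint_filter.mpr fun x _ hU ⟨_, y, hy⟩ => (hU y).not_ge hy)]
  refine (sum_le_chExcess_add_sum_compl hV fun x hx y hy => ?_).trans (add_le_add hexc hW)
  rcases mem_union.mp hx with hx | hx
  · exact (mem_filter.mp hx).2 y
  · exact (mem_filter.mp hx).2.1 y hy

lemma exists_map_of_isChannel [Nonempty 𝒴] (hV : IsChannel V)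
    (hexc : chExcess pX V d D ≤ ENNReal.ofReal ε) {W : Finset 𝒴} (hWne : W.Nonempty)
    (hW : ∑ y ∈ Wᶜ, marginal pX V y ≤ ENNReal.ofReal δ) :
    ∃ (φ : 𝒳 → 𝒴) (S : Finset 𝒴), #S ≤ #W + 1 ∧
      ∑ x with D < d x (φ x), pX x ≤ ENNReal.ofReal ε ∧
      ∑ x with φ x ∉ S, pX x ≤ ENNReal.ofReal δ := by
  classical
  set U : Finset 𝒳 := {x | ∀ y, D < d x y}
  set B : Finset 𝒳 := {x | (∀ y ∈ W, D < d x y) ∧ ∃ y, d x y ≤ D}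
  obtain ⟨T, R, hTB, hRB, hL, hT, hR⟩ := ENNReal.exists_split_sum_le pX B
    (sum_uncoverable_add_sum_uncovered_le hV hexc hW) (sum_uncoverable_le hV hexc)
  set L := B \ (T ∪ R)
  choose y₀ hy₀W hy₀ using fun x => W.exists_min_image (d x) hWne
  choose y₁ hy₁ using fun x => Finite.exists_min (d x)
  have hB (x) (hx : x ∈ B) : d x (y₁ x) ≤ D :=
    have ⟨y, hy⟩ := (mem_filter.mp hx).2.2
    (hy₁ x y).trans hy
  refine ⟨fun x => if x ∈ R ∪ L then y₁ x else y₀ x, W ∪ L.image y₁, ?_, ?_, ?_⟩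
  · exact (card_union_le _ _).trans (Nat.add_le_add_left (card_image_le.trans hL) _)
  · have hsub : ({x | D < d x (if x ∈ R ∪ L then y₁ x else y₀ x)} : Finset 𝒳) ⊆ U ∪ T := by
      intro x hx
      simp only [mem_filter, mem_univ, true_and] at hx
      split_ifs at hx with hxRL
      · exact absurd (hB x (union_subset hRB sdiff_subset hxRL)) (not_le.mpr hx)
      have hxW (y) (hy : y ∈ W) : D < d x y := hx.trans_le (hy₀ x y hy)
      by_cases hxU : ∀ y, D < d x y
      · exact mem_union_left _ (mem_filter.mpr ⟨mem_univ x, hxU⟩)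
      have hxB : x ∈ B := mem_filter.mpr ⟨mem_univ x, hxW, by simpa using hxU⟩
      simp only [L, mem_union, mem_sdiff, not_or, not_and, not_not] at hxRL
      exact mem_union_right _ (by_contra fun hxT => hxRL.1 (hxRL.2 hxB hxT))
    calc _ ≤ ∑ x ∈ U ∪ T, pX x := sum_le_sum_of_subset hsub
      _ ≤ ∑ x ∈ U, pX x + ∑ x ∈ T, pX x := (sum_union_inter (s₁ := U) (f := pX)) ▸ le_self_add
      _ ≤ ENNReal.ofReal ε := hT
  · refine le_trans (sum_le_sum_of_subset fun x hx => ?_) hR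
    simp only [mem_filter, mem_univ, true_and] at hx
    by_contra hxR
    split_ifs at hx with hxRL
    · exact hx (mem_union_right _ (mem_image_of_mem y₁ ((mem_union.mp hxRL).resolve_left hxR)))
    · exact hx (mem_union_left _ (hy₀W x))

lemma exists_isCode_of_map [Nonempty 𝒴] {N : ℕ} (φ : 𝒳 → 𝒴) (S : Finset 𝒴)
    (hS : #S < 2 ^ (N + 1)) (hdist : ∑ x with D < d x (φ x), pX x ≤ ENNReal.ofReal ε)
    (hout : ∑ x with φ x ∉ S, pX x ≤ ENNReal.ofReal δ) :
    ∃ (f : 𝒳 → List Bool) (g : List Bool → 𝒴), IsCode pX d D N ε δ (detEnc f) g := by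
  obtain ⟨e, he, hlen⟩ := exists_injective_length_le_of_card_lt S hS
  refine ⟨e ∘ φ, Function.invFun e, isCode_detEnc_iff.mpr ⟨?_, ?_⟩⟩
  · simpa only [Function.comp_apply, Function.leftInverse_invFun he _] using hdist
  · refine le_trans (sum_le_sum_of_subset fun x hx => ?_) hout
    simp only [mem_filter, mem_univ, true_and, Function.comp_apply] at hx ⊢
    exact fun hxS => (not_le.mpr hx) (by exact_mod_cast hlen _ hxS)

lemma exists_isCode_of_isChannel [Nonempty 𝒴] (hpX : ∑ x, pX x = 1) (hδ : 0 ≤ δ)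
    (hV : IsChannel V) (hexc : chExcess pX V d D ≤ ENNReal.ofReal ε)
    {W : Finset 𝒴} (hWne : W.Nonempty) (hW : ENNReal.ofReal (1 - δ) ≤ ∑ y ∈ W, marginal pX V y)
    {N : ℕ} (hN : #W + 2 ≤ 2 ^ (N + 1)) :
    ∃ (f : 𝒳 → List Bool) (g : List Bool → 𝒴), IsCode pX d D N ε δ (detEnc f) g := by
  have hWc := (ENNReal.sum_compl_le_ofReal_iff (by rw [sum_marginal hV, hpX]) W hδ).mpr hW
  obtain ⟨φ, S, hS, hdist, hout⟩ := exists_map_of_isChannel hV hexc hWne hWc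
  exact exists_isCode_of_map φ S (by omega) hdist hout

end Achievability

theorem stmt4_general {𝒳 𝒴 : Type} [Fintype 𝒳] [Fintype 𝒴] [Nonempty 𝒴]
    (pX : 𝒳 → ℝ≥0∞) (hpX : ∑ x, pX x = 1)
    (d : 𝒳 → 𝒴 → ℝ)
    (D ε δ : ℝ) (hδ : 0 ≤ δ ∧ δ < 1)
    (hG : Gq pX d D ε δ ≠ ⊤) :
    (Gq pX d D ε δ).toReal - 1 <
        sInf {R : ℝ | 0 ≤ R ∧ ∃ (f : 𝒳 → List Bool) (g : List Bool → 𝒴),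
          IsCode pX d D R ε δ (detEnc f) g} ∧
      sInf {R : ℝ | 0 ≤ R ∧ ∃ (f : 𝒳 → List Bool) (g : List Bool → 𝒴),
          IsCode pX d D R ε δ (detEnc f) g}
        ≤ ((⌊(Gq pX d D ε δ).toReal +
            2 * Real.logb 2 (Real.exp 1) / (2 : ℝ) ^ (Gq pX d D ε δ).toReal⌋ : ℤ) : ℝ) := by
  classical
  obtain ⟨V, W, hV, hexc, hWne, hW, hGW⟩ := exists_optimal_channel hpX hδ hG
  set G := (Gq pX d D ε δ).toReal
  set rates := {R : ℝ | 0 ≤ R ∧ ∃ (f : 𝒳 → List Bool) (g : List Bool → 𝒴),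
    IsCode pX d D R ε δ (detEnc f) g}
  set a := G + 2 * Real.logb 2 (Real.exp 1) / (2 : ℝ) ^ G
  obtain ⟨f, g, hcode⟩ := exists_isCode_of_isChannel hpX hδ.1 hV hexc hWne hW
    (add_two_le_two_pow_floor_add_one hWne.card_pos hGW)
  have hmem : (⌊a⌋₊ : ℝ) ∈ rates := ⟨Nat.cast_nonneg _, f, g, hcode⟩
  constructor
  · refine (Nat.sub_one_lt_floor G).trans_le (le_csInf ⟨_, hmem⟩ ?_)
    rintro R ⟨hR, f', g', hcode'⟩
    have hGR : ⌊G⌋₊ < ⌊R⌋₊ + 1 := (Nat.floor_lt ENNReal.toReal_nonneg).mpr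
      (by exact_mod_cast toReal_Gq_lt_floor_add_one hpX hδ.1 hcode')
    exact (Nat.cast_le.mpr (Nat.lt_add_one_iff.mp hGR)).trans (Nat.floor_le hR)
  · have ha : 0 ≤ a := add_nonneg ENNReal.toReal_nonneg <| div_nonneg
      (mul_nonneg zero_le_two (Real.logb_nonneg one_lt_two (Real.one_le_exp zero_le_one)))
      (by positivity)
    rw [← Int.natCast_floor_eq_floor ha, Int.cast_natCast]
    exact csInf_le ⟨0, fun R hR => hR.1⟩ hmem

/-- Two-sided bound on the optimal rate `R̃(D,ε,δ)` for deterministic codes: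
`G^δ_{D,ε}(X) - 1 < R̃(D,ε,δ) ≤ ⌊G^δ_{D,ε}(X) + (2 log₂ e)/2^{G^δ_{D,ε}(X)}⌋`. -/
theorem stmt4 {𝒳 𝒴 : Type} [Fintype 𝒳] [Fintype 𝒴] [Nonempty 𝒳] [Nonempty 𝒴]
    (pX : 𝒳 → ℝ≥0∞) (hpX : ∑ x, pX x = 1)
    (d : 𝒳 → 𝒴 → ℝ) (hd : ∀ x y, 0 ≤ d x y)
    (D ε δ : ℝ) (hD : 0 ≤ D) (hε : 0 ≤ ε ∧ ε < 1) (hδ : 0 ≤ δ ∧ δ < 1)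
    (hG : Gq pX d D ε δ ≠ ⊤) :
    (Gq pX d D ε δ).toReal - 1 <
        sInf {R : ℝ | 0 ≤ R ∧ ∃ (f : 𝒳 → List Bool) (g : List Bool → 𝒴),
          IsCode pX d D R ε δ (detEnc f) g} ∧
      sInf {R : ℝ | 0 ≤ R ∧ ∃ (f : 𝒳 → List Bool) (g : List Bool → 𝒴),
          IsCode pX d D R ε δ (detEnc f) g}
        ≤ ((⌊(Gq pX d D ε δ).toReal +
            2 * Real.logb 2 (Real.exp 1) / (2 : ℝ) ^ (Gq pX d D ε δ).toReal⌋ : ℤ) : ℝ) :=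
  stmt4_general pX hpX d D ε δ hδ hG

end
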